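/- arXiv:2510.10673 — 7 statements merged into one kernel-verified Lean document; each statement's English description precedes it below -/
import Mathlib

section
/- Let G be a group and C a subgroup. Suppose there exists a subsemigroup P ⊆ G with P ⊔ P⁻¹ = G \ C (disjoint union) and CPC ⊆ P, and suppose C admits a left-ordering with positive cone Q ⊆ C. Then R = P ∪ Q is the positive cone of a left-ordering of G with respect to which C is a convex subgroup. -/
open Pointwise

/-- If `P` is a subsemigroup of `G` with `P ⊔ P⁻¹ = G \ C` (disjoint) and
`CPC ⊆ P`, and `Q ⊆ C` is the positive cone of a left-ordering of `C`, then `R = P ∪ Q`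
is the positive cone of a left-ordering of `G` relative to which `C` is convex. -/
theorem stmt1 (G : Type*) [Group G] (C : Subgroup G) (P Q : Set G)
    (hPsemi : ∀ a ∈ P, ∀ b ∈ P, a * b ∈ P)
    (hPunion : P ∪ P⁻¹ = ((C : Set G))ᶜ)
    (hPdisj : Disjoint P P⁻¹)
    (hCPC : ∀ c ∈ C, ∀ p ∈ P, ∀ c' ∈ C, c * p * c' ∈ P)
    (hQsub : Q ⊆ (C : Set G))
    (hQsemi : ∀ a ∈ Q, ∀ b ∈ Q, a * b ∈ Q)
    (hQunion : Q ∪ Q⁻¹ = (C : Set G) \ {1})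
    (hQdisj : Disjoint Q Q⁻¹)
    (R : Set G) (hR : R = P ∪ Q) :
    (∀ a ∈ R, ∀ b ∈ R, a * b ∈ R) ∧
    R ∪ R⁻¹ = ({1} : Set G)ᶜ ∧
    Disjoint R R⁻¹ ∧
    (∀ a ∈ C, ∀ b ∈ C, ∀ g : G, a⁻¹ * g ∈ R → g⁻¹ * b ∈ R → g ∈ C) := by
  subst hR
  have hPC : ∀ x ∈ P, x ∉ (C : Set G) := by
    intro x hx
    have : x ∈ ((C : Set G))ᶜ := by rw [← hPunion]; exact Or.inl hx
    exact this
  have hPC' : ∀ x ∈ P⁻¹, x ∉ (C : Set G) := by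
    intro x hx
    have : x ∈ ((C : Set G))ᶜ := by rw [← hPunion]; exact Or.inr hx
    exact this
  refine ⟨?_, ?_, ?_, ?_⟩
  · rintro a (ha | ha) b (hb | hb)
    · exact Or.inl (hPsemi a ha b hb)
    · have := hCPC 1 (one_mem C) a ha b (hQsub hb)
      simpa using Or.inl this
    · have := hCPC a (hQsub ha) b hb 1 (one_mem C)
      simpa using Or.inl this
    · exact Or.inr (hQsemi a ha b hb)
  · ext x
    simp only [Set.mem_union, Set.mem_compl_iff, Set.mem_singleton_iff, Set.union_inv,
      Set.mem_inv]
    constructor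
    · rintro ((h | h) | (h | h)) rfl
      · exact hPC 1 h (one_mem C)
      · have : (1:G) ∈ Q ∪ Q⁻¹ := Or.inl h
        rw [hQunion] at this; exact this.2 rfl
      · exact hPC _ h (by simpa using one_mem C)
      · have : (1:G) ∈ Q ∪ Q⁻¹ := Or.inr h
        rw [hQunion] at this; exact this.2 rfl
    · intro hx
      by_cases hxC : x ∈ (C : Set G)
      · have : x ∈ Q ∪ Q⁻¹ := hQunion ▸ ⟨hxC, hx⟩
        rcases this with h | h
        · exact Or.inl (Or.inr h)
        · exact Or.inr (Or.inr h)
      · have : x ∈ P ∪ P⁻¹ := hPunion ▸ hxC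
        rcases this with h | h
        · exact Or.inl (Or.inl h)
        · exact Or.inr (Or.inl h)
  · rw [Set.disjoint_left]
    rintro x (hx | hx) hx'
    · rw [Set.union_inv, Set.mem_union] at hx'
      rcases hx' with h | h
      · exact hPdisj.le_bot ⟨hx, h⟩
      · exact hPC x hx (by simpa using C.inv_mem (hQsub (Set.mem_inv.1 h)))
    · rw [Set.union_inv, Set.mem_union] at hx'
      rcases hx' with h | h
      · exact hPC' x h (hQsub hx)
      · exact hQdisj.le_bot ⟨hx, h⟩
  · intro a ha b hb g hag hgb
    by_contra hgC
    have hag' : a⁻¹ * g ∈ P := by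
      rcases hag with h | h
      · exact h
      · exact absurd (by simpa using C.mul_mem ha (hQsub h)) hgC
    have hgb' : g⁻¹ * b ∈ P := by
      rcases hgb with h | h
      · exact h
      · have : g = b * (g⁻¹ * b)⁻¹ := by group
        exact absurd (this ▸ C.mul_mem hb (C.inv_mem (hQsub h))) hgC
    have : (a⁻¹ * g) * (g⁻¹ * b) ∈ P := hPsemi _ hag' _ hgb'
    have heq : (a⁻¹ * g) * (g⁻¹ * b) = a⁻¹ * b := by group
    exact hPC _ this (heq ▸ C.mul_mem (C.inv_mem ha) hb)
end

section
/- Let G be a group and N a normal subgroup. If P is a relative cone of G with N = G \ (P ∪ P⁻¹) and gPg⁻¹ = P for all g ∈ G, then G/N is bi-orderable, with positive cone q(P) where q : G → G/N is the quotient map. -/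
open Pointwise

/-- `P` is a relative cone of `G`: a subsemigroup with `P ∩ P⁻¹ = ∅` such that
`C = G \ (P ∪ P⁻¹)` is a subgroup satisfying `CPC ⊆ P`. -/
def IsRelCone {G : Type*} [Group G] (P : Set G) : Prop :=
  (∀ a ∈ P, ∀ b ∈ P, a * b ∈ P) ∧
  P ∩ P⁻¹ = ∅ ∧
  ∃ C : Subgroup G, (C : Set G) = (P ∪ P⁻¹)ᶜ ∧
    ∀ c ∈ C, ∀ p ∈ P, ∀ c' ∈ C, c * p * c' ∈ P

/-- `Q` is the positive cone of a bi-ordering of `H`. -/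
def IsBiOrderCone {H : Type*} [Group H] (Q : Set H) : Prop :=
  (∀ a ∈ Q, ∀ b ∈ Q, a * b ∈ Q) ∧
  Q ∪ Q⁻¹ = ({1} : Set H)ᶜ ∧
  Disjoint Q Q⁻¹ ∧
  (∀ h : H, ∀ q ∈ Q, h * q * h⁻¹ ∈ Q)

/-- If `P` is a relative cone of `G` with `N = G \ (P ∪ P⁻¹)` and
`gPg⁻¹ = P` for all `g`, then `q(P)` is the positive cone of a bi-ordering of `G/N`,
where `q : G → G/N` is the quotient map; in particular `G/N` is bi-orderable. -/
theorem stmt7 (G : Type*) [Group G] (N : Subgroup G) [N.Normal] (P : Set G)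
    (hP : IsRelCone P) (hN : (N : Set G) = (P ∪ P⁻¹)ᶜ)
    (hconj : ∀ g : G, (fun x => g * x * g⁻¹) '' P = P) :
    IsBiOrderCone ((QuotientGroup.mk' N) '' P) := by
  obtain ⟨hmul, hdisj, C, hC, hCPC⟩ := hP
  set q := QuotientGroup.mk' N with hq
  have hmem : ∀ x : G, x ∈ N ↔ x ∉ P ∪ P⁻¹ := by
    intro x
    constructor
    · intro hx
      have : x ∈ (N : Set G) := hx
      rw [hN] at this
      exact this
    · intro hx
      have : x ∈ ((P ∪ P⁻¹)ᶜ : Set G) := hx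
      rw [← hN] at this
      exact this
  have hker : ∀ x : G, q x = 1 ↔ x ∈ N := fun x => QuotientGroup.eq_one_iff x
  have hPnotN : ∀ p ∈ P, p ∉ N := by
    intro p hp hpn
    exact (hmem p).mp hpn (Or.inl hp)
  refine ⟨?_, ?_, ?_, ?_⟩
  · rintro a ⟨p, hp, rfl⟩ b ⟨p', hp', rfl⟩
    exact ⟨p * p', hmul p hp p' hp', map_mul q p p'⟩
  · ext y
    simp only [Set.mem_union, Set.mem_compl_iff, Set.mem_singleton_iff, Set.mem_inv]
    constructor
    · rintro (⟨p, hp, rfl⟩ | ⟨p, hp, hy⟩)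
      · intro h1
        exact hPnotN p hp ((hker p).mp h1)
      · intro h1
        subst h1
        simp only [inv_one] at hy
        exact hPnotN p hp ((hker p).mp hy)
    · intro h1
      obtain ⟨g, rfl⟩ := QuotientGroup.mk'_surjective N y
      have hg : g ∉ N := fun hg => h1 ((hker g).mpr hg)
      have : g ∈ P ∪ P⁻¹ := by
        by_contra hgp
        exact hg ((hmem g).mpr hgp)
      rcases this with hg1 | hg1
      · exact Or.inl ⟨g, hg1, rfl⟩
      · refine Or.inr ⟨g⁻¹, hg1, ?_⟩
        rw [map_inv]
  · rw [Set.disjoint_left]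
    rintro y ⟨p, hp, rfl⟩ ⟨p', hp', hy⟩
    have : q (p' * p) = 1 := by
      rw [map_mul, hy, inv_mul_cancel]
    have hppN := (hker _).mp this
    exact hPnotN _ (hmul p' hp' p hp) hppN
  · rintro h _ ⟨p, hp, rfl⟩
    obtain ⟨g, rfl⟩ := QuotientGroup.mk'_surjective N h
    refine ⟨g * p * g⁻¹, ?_, by rw [map_mul, map_mul, map_inv]⟩
    rw [← hconj g]
    exact ⟨p, hp, rfl⟩
end

section
/- Let 1 → K → H → G → 1 be a short exact sequence of groups with inclusion i and quotient map q. If P_G ⊆ G is the positive cone of a bi-ordering of G, P_K ⊆ i(K) is the positive cone of a bi-ordering of i(K), and hP_Kh⁻¹ ⊆ P_K for all h ∈ H, then P_H = P_K ∪ q⁻¹(P_G) is the positive cone of a bi-ordering of H. -/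
open Pointwise

/-- Let `1 → K → H → G → 1` be a short exact sequence with inclusion `i`
and quotient map `q`. If `P_G` is the positive cone of a bi-ordering of `G`, `P_K ⊆ i(K)`
is the positive cone of a bi-ordering of `i(K)`, and `h P_K h⁻¹ ⊆ P_K` for all `h ∈ H`,
then `P_H = P_K ∪ q⁻¹(P_G)` is the positive cone of a bi-ordering of `H`. -/
theorem stmt13 (K H G : Type*) [Group K] [Group H] [Group G]
    (i : K →* H) (q : H →* G)
    (hinj : Function.Injective i) (hsurj : Function.Surjective q)
    (hexact : i.range = q.ker)
    (PG : Set G) (hPG : IsBiOrderCone PG)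
    (PK : Set H)
    (hPKsub : PK ⊆ Set.range i)
    (hPKsemi : ∀ a ∈ PK, ∀ b ∈ PK, a * b ∈ PK)
    (hPKunion : PK ∪ PK⁻¹ = Set.range i \ {1})
    (hPKdisj : Disjoint PK PK⁻¹)
    (hPKconj : ∀ h : H, ∀ p ∈ PK, h * p * h⁻¹ ∈ PK) :
    IsBiOrderCone (PK ∪ q ⁻¹' PG) := by
  obtain ⟨hGsemi, hGunion, hGdisj, hGconj⟩ := hPG
  -- basic facts
  have hker : ∀ x : H, x ∈ PK → q x = 1 := by
    intro x hx
    have : x ∈ q.ker := hexact ▸ hPKsub hx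
    exact this
  have h1G : (1 : G) ∉ PG := by
    intro h
    have : (1 : G) ∈ PG ∪ PG⁻¹ := Or.inl h
    rw [hGunion] at this
    exact this rfl
  have h1K : (1 : H) ∉ PK := by
    intro h
    have : (1 : H) ∈ PK ∪ PK⁻¹ := Or.inl h
    rw [hPKunion] at this
    exact this.2 rfl
  refine ⟨?_, ?_, ?_, ?_⟩
  · rintro a (ha | ha) b (hb | hb)
    · exact Or.inl (hPKsemi a ha b hb)
    · refine Or.inr ?_
      simp only [Set.mem_preimage, map_mul, hker a ha, one_mul]
      exact hb
    · refine Or.inr ?_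
      simp only [Set.mem_preimage, map_mul, hker b hb, mul_one]
      exact ha
    · exact Or.inr (by simpa [Set.mem_preimage, map_mul] using hGsemi _ ha _ hb)
  · ext x
    simp only [Set.mem_union, Set.mem_inv, Set.mem_preimage, Set.mem_compl_iff,
      Set.mem_singleton_iff]
    constructor
    · rintro ((hx | hx) | (hx | hx)) rfl
      · exact h1K hx
      · exact h1G (by simpa using hx)
      · exact h1K (by simpa using hx)
      · exact h1G (by simpa using hx)
    · intro hx
      by_cases hq : q x = 1
      · have hmem : x ∈ PK ∪ PK⁻¹ := by
          rw [hPKunion]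
          refine ⟨?_, hx⟩
          have hm : x ∈ q.ker := hq
          rw [← hexact] at hm
          obtain ⟨k, hk⟩ := hm
          exact ⟨k, hk⟩
        rcases hmem with h | h
        · exact Or.inl (Or.inl h)
        · exact Or.inr (Or.inl h)
      · have : q x ∈ PG ∪ PG⁻¹ := by rw [hGunion]; exact hq
        rcases this with h | h
        · exact Or.inl (Or.inr h)
        · exact Or.inr (Or.inr (by simpa using h))
  · rw [Set.disjoint_left]
    rintro x (hx | hx) hx'
    · rw [Set.mem_inv, Set.mem_union] at hx'
      rcases hx' with h | h
      · exact hPKdisj.le_bot ⟨hx, h⟩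
      · have : q x⁻¹ = 1 := by rw [map_inv, hker x hx, inv_one]
        exact h1G (this ▸ h)
    · rw [Set.mem_inv, Set.mem_union] at hx'
      rcases hx' with h | h
      · have : q x = 1 := by
          have := hker x⁻¹ h
          rw [map_inv, inv_eq_one] at this
          exact this
        exact h1G (this ▸ hx)
      · have h2 : (q x)⁻¹ ∈ PG := by simpa using h
        exact hGdisj.le_bot ⟨hx, h2⟩
  · rintro h p (hp | hp)
    · exact Or.inl (hPKconj h p hp)
    · exact Or.inr (by simpa using hGconj (q h) _ hp)
end

section
/- Let G be a bi-orderable group and let B be the free abelian group on the set of elements of G, with basis {b_g}_{g∈G}. Let G act on B by g · Σⱼ tⱼ b_{gⱼ} = Σⱼ tⱼ b_{ggⱼ}. Then the semidirect product B ⋊ G is bi-orderable. -/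
open Pointwise

/-!
Order `B ⋊ G` lexicographically with the `G`-coordinate dominant: `(b, g)` is positive when
`g > 1`, or when `g = 1` and `b > 0`. This cone is conjugation invariant as soon as the cone of `B`
is bi-invariant and preserved by the action of `G`. Take on `B = G →₀ ℤ` the lexicographic order
built from the order of `G` (a nonzero element is positive when its coefficient at the least point
of its support is positive); left translation is an order automorphism of `G`, so the action of
`G` on `B` preserves this order.
-/

namespace IsBiOrderCone

variable {H : Type*} [Group H] {Q : Set H}

theorem mk' (mul_mem : ∀ a ∈ Q, ∀ b ∈ Q, a * b ∈ Q) (one_notMem : (1 : H) ∉ Q)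
    (mem_or_inv_mem : ∀ h : H, h ≠ 1 → h ∈ Q ∨ h⁻¹ ∈ Q)
    (conj_mem : ∀ h : H, ∀ q ∈ Q, h * q * h⁻¹ ∈ Q) : IsBiOrderCone Q := by
  refine ⟨mul_mem, ?_, ?_, conj_mem⟩
  · ext h
    refine ⟨?_, mem_or_inv_mem h⟩
    rintro (hh | hh) rfl
    exacts [one_notMem hh, one_notMem (by simpa using hh)]
  · refine Set.disjoint_left.mpr fun h hh hi => one_notMem ?_
    simpa using mul_mem h hh h⁻¹ hi

theorem mul_mem (hQ : IsBiOrderCone Q) {a b : H} (ha : a ∈ Q) (hb : b ∈ Q) : a * b ∈ Q :=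
  hQ.1 a ha b hb

theorem conj_mem (hQ : IsBiOrderCone Q) (h : H) {q : H} (hq : q ∈ Q) : h * q * h⁻¹ ∈ Q :=
  hQ.2.2.2 h q hq

theorem mem_or_inv_mem (hQ : IsBiOrderCone Q) {h : H} (h1 : h ≠ 1) : h ∈ Q ∨ h⁻¹ ∈ Q := by
  have : h ∈ Q ∪ Q⁻¹ := hQ.2.1 ▸ h1
  exact this

theorem one_notMem (hQ : IsBiOrderCone Q) : (1 : H) ∉ Q := fun h1 => by
  have : (1 : H) ∈ Q ∪ Q⁻¹ := Or.inl h1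
  exact (hQ.2.1 ▸ this) rfl

theorem isStrictTotalOrder (hQ : IsBiOrderCone Q) :
    IsStrictTotalOrder H (fun a b => a⁻¹ * b ∈ Q) where
  irrefl a := by simpa using hQ.one_notMem
  trans a b c hab hbc := by simpa [mul_assoc] using hQ.mul_mem hab hbc
  trichotomous a b hab hba := by
    by_contra hne
    refine (hQ.mem_or_inv_mem (h := a⁻¹ * b) ?_).elim hab ?_
    · simpa [inv_mul_eq_one] using hne
    · simpa using hba

noncomputable abbrev leftOrder (hQ : IsBiOrderCone Q) : LinearOrder H :=
  haveI := hQ.isStrictTotalOrder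
  open Classical in linearOrderOfSTO (fun a b : H => a⁻¹ * b ∈ Q)

theorem mulLeftStrictMono (hQ : IsBiOrderCone Q) :
    letI := hQ.leftOrder
    MulLeftStrictMono H := by
  let := hQ.leftOrder
  refine ⟨fun g {a b} (hab : a⁻¹ * b ∈ Q) => ?_⟩
  show (g * a)⁻¹ * (g * b) ∈ Q
  simpa [mul_assoc] using hab

end IsBiOrderCone

theorem Finsupp.Lex.mapDomain_lt_mapDomain {α β N : Type*} [LinearOrder α] [Preorder β]
    [AddCommMonoid N] [LT N] {f : α → β} (hf : StrictMono f) {x y : α →₀ N}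
    (hxy : toLex x < toLex y) : toLex (x.mapDomain f) < toLex (y.mapDomain f) := by
  obtain ⟨i, hlt, hi⟩ := Finsupp.Lex.lt_iff.mp hxy
  refine Finsupp.Lex.lt_iff.mpr ⟨f i, fun j hj => ?_, ?_⟩
  · by_cases hj' : j ∈ Set.range f
    · obtain ⟨k, rfl⟩ := hj'
      simpa [Finsupp.mapDomain_apply hf.injective] using hlt k (hf.lt_iff_lt.mp hj)
    · simp [Finsupp.mapDomain_of_notMem_range _ _ hj']
  · simpa [Finsupp.mapDomain_apply hf.injective] using hi

theorem isBiOrderCone_toLex_pos (α N : Type*) [LinearOrder α] [AddCommGroup N] [LinearOrder N]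
    [IsOrderedAddMonoid N] :
    IsBiOrderCone {b : Multiplicative (α →₀ N) | 0 < toLex b.toAdd} := by
  refine .mk' (fun a ha b hb => show 0 < toLex a.toAdd + toLex b.toAdd from add_pos ha hb)
    (lt_irrefl (0 : Lex (α →₀ N))) (fun b hb => ?_) (fun h q hq => by simpa using hq)
  rcases lt_trichotomy 0 (toLex b.toAdd) with h | h | h
  · exact Or.inl h
  · exact absurd (toLex.injective h.symm) hb
  · exact Or.inr (neg_pos.mpr h)

theorem IsBiOrderCone.semidirectProduct {N G : Type*} [Group N] [Group G] {φ : G →* MulAut N}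
    {PN : Set N} {PG : Set G} (hN : IsBiOrderCone PN) (hG : IsBiOrderCone PG)
    (hφ : ∀ g : G, ∀ n ∈ PN, φ g n ∈ PN) :
    IsBiOrderCone {p : N ⋊[φ] G | p.right ∈ PG ∨ p.right = 1 ∧ p.left ∈ PN} := by
  refine .mk' ?_ ?_ (fun p hp => ?_) ?_
  · rintro a (ha | ⟨ha1, ha2⟩) b (hb | ⟨hb1, hb2⟩)
    · exact Or.inl (hG.mul_mem ha hb)
    · exact Or.inl (by simpa [hb1] using ha)
    · exact Or.inl (by simpa [ha1] using hb)
    · exact Or.inr ⟨by simp [ha1, hb1], by simpa [ha1] using hN.mul_mem ha2 hb2⟩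
  · rintro (h | ⟨-, h⟩)
    exacts [hG.one_notMem h, hN.one_notMem h]
  · by_cases hr : p.right = 1
    · have hl : p.left ≠ 1 := fun hl => hp (SemidirectProduct.ext hl hr)
      refine (hN.mem_or_inv_mem hl).imp (fun h => Or.inr ⟨hr, h⟩) (fun h => Or.inr ?_)
      exact ⟨by simp [hr], by simpa [hr] using h⟩
    · exact (hG.mem_or_inv_mem hr).imp Or.inl Or.inl
  · rintro h q (hq | ⟨hq1, hq2⟩)
    · exact Or.inl (hG.conj_mem h.right hq)
    · refine Or.inr ⟨by simp [hq1], ?_⟩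
      have hleft : (h * q * h⁻¹).left = h.left * φ h.right q.left * h.left⁻¹ := by
        rw [SemidirectProduct.mul_left, SemidirectProduct.mul_left, SemidirectProduct.mul_right,
          hq1, mul_one, SemidirectProduct.inv_left, ← MulAut.mul_apply, ← map_mul,
          mul_inv_cancel, map_one, MulAut.one_apply]
      rw [hleft]
      exact hN.conj_mem h.left (hφ h.right _ hq2)

/-- Let `G` be a bi-orderable group and let `B = G →₀ ℤ` be the free
abelian group on the elements of `G`, with `G` acting on `B` by shifting indices:
`g · Σ tⱼ b_{gⱼ} = Σ tⱼ b_{g gⱼ}` (i.e. `mapDomain (g * ·)`).  Then the semidirect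
product `B ⋊ G` is bi-orderable. -/
theorem stmt14 (G : Type*) [Group G]
    (hG : ∃ PG : Set G, IsBiOrderCone PG)
    (φ : G →* MulAut (Multiplicative (G →₀ ℤ)))
    (hφ : ∀ (g : G) (b : G →₀ ℤ),
      φ g (Multiplicative.ofAdd b) =
        Multiplicative.ofAdd (Finsupp.mapDomain (fun x => g * x) b)) :
    ∃ P : Set (Multiplicative (G →₀ ℤ) ⋊[φ] G), IsBiOrderCone P := by
  obtain ⟨PG, hPG⟩ := hG
  let := hPG.leftOrder
  have := hPG.mulLeftStrictMono
  refine ⟨_, (isBiOrderCone_toLex_pos G ℤ).semidirectProduct hPG fun g b hb => ?_⟩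
  have hshift := Finsupp.Lex.mapDomain_lt_mapDomain (x := 0) (mul_right_strictMono (a := g)) hb
  rw [Finsupp.mapDomain_zero] at hshift
  show 0 < toLex (φ g b).toAdd
  rwa [show φ g b = _ from hφ g b.toAdd]
end

section
/- Let G be a bi-orderable group with positive cone P and bi-ordering <_P. Let B be the free abelian group with basis {b_g}_{g∈G}. Define Q ⊆ B by: a nonzero element b = Σⱼ tⱼ b_{gⱼ} (all tⱼ ≠ 0, gⱼ distinct) lies in Q iff the coefficient t_{i₀} corresponding to g_{i₀} = min_{<_P}{g₁,…,g_n} is positive. Then Q is the positive cone of a bi-ordering of B, and Q is invariant under the G-action g · b_{g'} = b_{gg'} extended linearly. -/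
/-- Let `G` be a group with a bi-ordering `<` (a linear order invariant
under left and right multiplication, with positive cone `{g | 1 < g}`), and let
`B = G →₀ ℤ` be the free abelian group with basis `{b_g}`.  Define `Q ⊆ B` by: a nonzero
`b` lies in `Q` iff its coefficient at the `<`-least element of its support is positive.
Then `Q` is the positive cone of a bi-ordering of `B` (i.e. `Q` is closed under addition
and `B \ {0} = Q ⊔ (-Q)` disjointly), and `Q` is invariant under the `G`-action
`g · b_{g'} = b_{g g'}` extended linearly. -/
theorem stmt15 (G : Type*) [Group G] [LinearOrder G]
    (hleft : ∀ a b c : G, a < b → c * a < c * b)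
    (hright : ∀ a b c : G, a < b → a * c < b * c)
    (Q : Set (G →₀ ℤ))
    (hQ : Q = {b : G →₀ ℤ | ∃ h : b.support.Nonempty, 0 < b (b.support.min' h)}) :
    (∀ a ∈ Q, ∀ b ∈ Q, a + b ∈ Q) ∧
    Q ∪ (-Q) = ({0} : Set (G →₀ ℤ))ᶜ ∧
    Disjoint Q (-Q) ∧
    (∀ (g : G), ∀ b ∈ Q, Finsupp.mapDomain (fun x => g * x) b ∈ Q) := by
  subst hQ
  have key : ∀ (b : G →₀ ℤ) (h : b.support.Nonempty) (x : G),
      x < b.support.min' h → b x = 0 := by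
    intro b h x hx
    by_contra hbx
    exact absurd (Finset.min'_le _ x (Finsupp.mem_support_iff.mpr hbx)) (not_le.mpr hx)
  constructor
  · rintro a ⟨ha, hpa⟩ b ⟨hb, hpb⟩
    set ma := a.support.min' ha with hma
    set mb := b.support.min' hb with hmb
    set m := min ma mb with hm
    have ham : 0 ≤ a m := by
      rcases lt_or_eq_of_le (min_le_left ma mb) with h | h
      · rw [key a ha m h]
      · rw [hm, h]; exact hpa.le
    have hbm : 0 ≤ b m := by
      rcases lt_or_eq_of_le (min_le_right ma mb) with h | h
      · rw [key b hb m h]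
      · rw [hm, h]; exact hpb.le
    have hsum : 0 < a m + b m := by
      rcases min_cases ma mb with ⟨h, _⟩ | ⟨h, _⟩
      · have : 0 < a m := by rw [hm, h]; exact hpa
        linarith
      · have : 0 < b m := by rw [hm, h]; exact hpb
        linarith
    have habm : (a + b) m ≠ 0 := by
      simp only [Finsupp.add_apply]; omega
    have hmem : m ∈ (a + b).support := Finsupp.mem_support_iff.mpr habm
    have hne : (a + b).support.Nonempty := ⟨m, hmem⟩
    have hmin : (a + b).support.min' hne = m := by
      apply le_antisymm (Finset.min'_le _ _ hmem)
      apply Finset.le_min'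
      intro y hy
      have : a y ≠ 0 ∨ b y ≠ 0 := by
        by_contra hc
        push_neg at hc
        have : (a + b) y = 0 := by simp [Finsupp.add_apply, hc.1, hc.2]
        exact Finsupp.mem_support_iff.mp hy this
      rcases this with h | h
      · exact le_trans (min_le_left ma mb) (Finset.min'_le _ _ (Finsupp.mem_support_iff.mpr h))
      · exact le_trans (min_le_right ma mb) (Finset.min'_le _ _ (Finsupp.mem_support_iff.mpr h))
    refine ⟨hne, ?_⟩
    rw [hmin]
    simp only [Finsupp.add_apply]
    omega
  refine ⟨?_, ?_, ?_⟩
  · ext b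
    simp only [Set.mem_union, Set.mem_setOf_eq, Set.mem_neg, Set.mem_compl_iff,
      Set.mem_singleton_iff]
    constructor
    · rintro (⟨h, hp⟩ | ⟨h, hp⟩) hb0
      · rw [hb0] at h; simp at h
      · rw [hb0] at h; simp at h
    · intro hb0
      have hne : b.support.Nonempty := by
        rw [Finsupp.support_nonempty_iff]; exact hb0
      have hcoef : b (b.support.min' hne) ≠ 0 :=
        Finsupp.mem_support_iff.mp (Finset.min'_mem _ hne)
      rcases lt_or_gt_of_ne hcoef with h | h
      · right
        have hsupp : (-b).support = b.support := Finsupp.support_neg b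
        have hne' : (-b).support.Nonempty := by rw [hsupp]; exact hne
        refine ⟨hne', ?_⟩
        have : (-b).support.min' hne' = b.support.min' hne := by
          congr 1
        rw [this, Finsupp.neg_apply]
        omega
      · exact Or.inl ⟨hne, h⟩
  · rw [Set.disjoint_left]
    rintro b ⟨h, hp⟩ ⟨h', hp'⟩
    have hsupp : (-b).support = b.support := Finsupp.support_neg b
    have : (-b).support.min' h' = b.support.min' h := by congr 1
    rw [this, Finsupp.neg_apply] at hp'
    omega
  · rintro g b ⟨h, hp⟩
    have hinj : Function.Injective (fun x : G => g * x) :=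
      fun x y hxy => by simpa using mul_left_cancel hxy
    have hsupp : (Finsupp.mapDomain (fun x => g * x) b).support
        = b.support.image (fun x => g * x) :=
      Finsupp.mapDomain_support_of_injective hinj b
    have hne' : (Finsupp.mapDomain (fun x => g * x) b).support.Nonempty := by
      rw [hsupp]; exact h.image _
    refine ⟨hne', ?_⟩
    have hmono : StrictMono (fun x : G => g * x) := fun x y hxy => hleft x y g hxy
    have hmin : (Finsupp.mapDomain (fun x => g * x) b).support.min' hne'
        = g * (b.support.min' h) := by
      apply le_antisymm
      · apply Finset.min'_le
        rw [hsupp, Finset.mem_image]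
        exact ⟨b.support.min' h, Finset.min'_mem _ h, rfl⟩
      · apply Finset.le_min'
        intro y hy
        rw [hsupp, Finset.mem_image] at hy
        obtain ⟨x, hx, rfl⟩ := hy
        exact hmono.monotone (Finset.min'_le _ _ hx)
    rw [hmin, Finsupp.mapDomain_apply hinj]
    exact hp
end

section
/- Let G be a group with left-ordering <_P with positive cone P, and let H(G,P) = B_f ⋊ G be the group constructed from the 2-cocycle f(b_g, b_h) = a_{g⁻¹h} (if g <_P h, else 0) with G acting on B_f by g·(a, Σ tⱼ b_{gⱼ}) = (a, Σ tⱼ b_{ggⱼ}). Then every automorphism φ of G preserving <_P induces an automorphism φ̃ of H(G,P) satisfying φ̃((a_h, 0), id) = ((a_{φ(h)}, 0), id) for all h ∈ P, and the assignment φ ↦ φ̃ is an injective group homomorphism Aut(G, <_P) → Aut(H(G,P)). -/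
/-! `φ̃` is `φ` applied coordinatewise, by functoriality of free abelian groups. It respects the
multiplication because `φ` commutes with left translations and preserves the cocycle: `φ` keeps
`g < h` and sends `g⁻¹ h` to `(φ g)⁻¹ φ h`. Functoriality gives `(φ ∘ ψ)~ = φ̃ ∘ ψ̃` and
`id~ = id`, hence bijectivity with inverse `(φ⁻¹)~`, and `φ` is read off the `G`-coordinate of
`φ̃`. -/

/-- Underlying set of `H(G,P) = B_f ⋊ G`, where `B_f` has underlying set `A × B` with
`A = {x // 1 < x} →₀ ℤ` (free abelian group on the positive cone `P = {x | 1 < x}`) and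
`B = G →₀ ℤ` (free abelian group on `G`). -/
abbrev HCar (G : Type*) [Group G] [LinearOrder G] : Type _ :=
  (({x : G // 1 < x} →₀ ℤ) × (G →₀ ℤ)) × G

/-- Multiplication of `H(G,P) = B_f ⋊ G`, built from the 2-cocycle `f` on `B` and the
shift action `g · Σ tⱼ b_{gⱼ} = Σ tⱼ b_{g gⱼ}` of `G` on `B_f`. -/
noncomputable def hmul {G : Type*} [Group G] [LinearOrder G]
    (f : (G →₀ ℤ) → (G →₀ ℤ) → ({x : G // 1 < x} →₀ ℤ)) (x y : HCar G) : HCar G :=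
  ((x.1.1 + y.1.1 + f x.1.2 (Finsupp.mapDomain (fun z => x.2 * z) y.1.2),
    x.1.2 + Finsupp.mapDomain (fun z => x.2 * z) y.1.2), x.2 * y.2)

/-- The map `φ̃` induced on `H(G,P)` by an order-preserving automorphism `φ` of `G`:
`φ̃(Σ sᵢ a_{hᵢ}, Σ tⱼ b_{gⱼ}, g) = (Σ sᵢ a_{φ(hᵢ)}, Σ tⱼ b_{φ(gⱼ)}, φ(g))`. -/
noncomputable def tilde {G : Type*} [Group G] [LinearOrder G] (φ : G ≃* G)
    (hφ : ∀ g h : G, g < h ↔ φ g < φ h) (x : HCar G) : HCar G :=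
  ((Finsupp.mapDomain
      (fun p : {x : G // 1 < x} =>
        (⟨φ p.1, by simpa using (hφ 1 p.1).mp p.2⟩ : {x : G // 1 < x})) x.1.1,
    Finsupp.mapDomain (fun g => φ g) x.1.2), φ x.2)

open Finsupp Function

theorem Finsupp.mapDomain_mapDomain_mul_left {M N R F : Type*} [Mul M] [Mul N]
    [AddCommMonoid R] [FunLike F M N] [MulHomClass F M N] (φ : F) (g : M) (c : M →₀ R) :
    mapDomain φ (mapDomain (g * ·) c) = mapDomain (φ g * ·) (mapDomain φ c) := by
  rw [← mapDomain_comp, ← mapDomain_comp]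
  congr 1
  funext z
  simp

section OrderPreserving

variable {M : Type*} [Mul M] [LT M]

theorem MulEquiv.lt_iff_symm_lt_symm (φ : M ≃* M) (hφ : ∀ g h : M, g < h ↔ φ g < φ h)
    (g h : M) : g < h ↔ φ.symm g < φ.symm h := by
  conv_rhs => rw [hφ, φ.apply_symm_apply, φ.apply_symm_apply]

theorem MulEquiv.lt_iff_trans_lt_trans {φ ψ : M ≃* M} (hφ : ∀ g h : M, g < h ↔ φ g < φ h)
    (hψ : ∀ g h : M, g < h ↔ ψ g < ψ h) (g h : M) :
    g < h ↔ (ψ.trans φ) g < (ψ.trans φ) h :=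
  (hψ g h).trans (hφ _ _)

end OrderPreserving

section Tilde

variable {G : Type*} [Group G] [LinearOrder G]

def positiveConeMap (φ : G ≃* G) (hφ : ∀ g h : G, g < h ↔ φ g < φ h) :
    {x : G // 1 < x} → {x : G // 1 < x} :=
  fun p => ⟨φ p.1, by simpa using (hφ 1 p.1).mp p.2⟩

theorem tilde_def (φ : G ≃* G) (hφ : ∀ g h : G, g < h ↔ φ g < φ h) (x : HCar G) :
    tilde φ hφ x =
      ((mapDomain (positiveConeMap φ hφ) x.1.1, mapDomain φ x.1.2), φ x.2) :=
  rfl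

/-- Both sides are biadditive in `(b, c)`, so it suffices to compare them on generators
`b_g, b_h`, where this amounts to `g < h ↔ φ g < φ h` and `φ (g⁻¹ h) = (φ g)⁻¹ φ h`. -/
theorem mapDomain_positiveConeMap_cocycle (hleft : ∀ a b c : G, a < b → c * a < c * b)
    (f : (G →₀ ℤ) → (G →₀ ℤ) → ({x : G // 1 < x} →₀ ℤ))
    (hbilin1 : ∀ b b' c : G →₀ ℤ, f (b + b') c = f b c + f b' c)
    (hbilin2 : ∀ b c c' : G →₀ ℤ, f b (c + c') = f b c + f b c')
    (hsingle : ∀ g h : G, f (Finsupp.single g 1) (Finsupp.single h 1) =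
      if hlt : g < h then
        Finsupp.single (⟨g⁻¹ * h, by simpa using hleft g h g⁻¹ hlt⟩ : {x : G // 1 < x}) 1
      else 0)
    (φ : G ≃* G) (hφ : ∀ g h : G, g < h ↔ φ g < φ h) (b c : G →₀ ℤ) :
    mapDomain (positiveConeMap φ hφ) (f b c) = f (mapDomain φ b) (mapDomain φ c) := by
  let F : (G →₀ ℤ) →+ (G →₀ ℤ) →+ ({x : G // 1 < x} →₀ ℤ) :=
    AddMonoidHom.mk' (fun b => AddMonoidHom.mk' (f b) (hbilin2 b))
      fun b b' => AddMonoidHom.ext (hbilin1 b b')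
  let Φ : (G →₀ ℤ) →+ (G →₀ ℤ) := mapDomain.addMonoidHom φ
  suffices F.compr₂ (mapDomain.addMonoidHom (positiveConeMap φ hφ)) = (F.comp Φ).compl₂ Φ from
    DFunLike.congr_fun (DFunLike.congr_fun this b) c
  refine addHom_ext' fun g => AddMonoidHom.ext_int <| addHom_ext' fun h => AddMonoidHom.ext_int ?_
  simp only [AddMonoidHom.comp_apply, singleAddHom_apply, AddMonoidHom.compr₂_apply,
    AddMonoidHom.compl₂_apply, mapDomain.addMonoidHom_apply, mapDomain_single, AddMonoidHom.mk'_apply, F, Φ, hsingle]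
  by_cases hgh : g < h
  · rw [dif_pos hgh, dif_pos ((hφ g h).mp hgh), mapDomain_single]
    congr 2
    simp [positiveConeMap]
  · rw [dif_neg hgh, dif_neg (mt (hφ g h).mpr hgh), mapDomain_zero]

theorem tilde_hmul (hleft : ∀ a b c : G, a < b → c * a < c * b)
    (f : (G →₀ ℤ) → (G →₀ ℤ) → ({x : G // 1 < x} →₀ ℤ))
    (hbilin1 : ∀ b b' c : G →₀ ℤ, f (b + b') c = f b c + f b' c)
    (hbilin2 : ∀ b c c' : G →₀ ℤ, f b (c + c') = f b c + f b c')
    (hsingle : ∀ g h : G, f (Finsupp.single g 1) (Finsupp.single h 1) =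
      if hlt : g < h then
        Finsupp.single (⟨g⁻¹ * h, by simpa using hleft g h g⁻¹ hlt⟩ : {x : G // 1 < x}) 1
      else 0)
    (φ : G ≃* G) (hφ : ∀ g h : G, g < h ↔ φ g < φ h) (x y : HCar G) :
    tilde φ hφ (hmul f x y) = hmul f (tilde φ hφ x) (tilde φ hφ y) := by
  simp only [tilde_def, hmul, mapDomain_add, map_mul, mapDomain_mapDomain_mul_left,
    mapDomain_positiveConeMap_cocycle hleft f hbilin1 hbilin2 hsingle]

theorem tilde_single_one (φ : G ≃* G) (hφ : ∀ g h : G, g < h ↔ φ g < φ h)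
    (h : {x : G // 1 < x}) :
    tilde φ hφ ((single h 1, 0), 1) = ((single (positiveConeMap φ hφ h) 1, 0), 1) := by
  simp [tilde_def]

theorem tilde_trans (φ : G ≃* G) (hφ : ∀ g h : G, g < h ↔ φ g < φ h)
    (ψ : G ≃* G) (hψ : ∀ g h : G, g < h ↔ ψ g < ψ h)
    (hcomp : ∀ g h : G, g < h ↔ (ψ.trans φ) g < (ψ.trans φ) h) (x : HCar G) :
    tilde (ψ.trans φ) hcomp x = tilde φ hφ (tilde ψ hψ x) := by
  simp only [tilde_def, ← mapDomain_comp]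
  rfl

theorem tilde_eq_self (e : G ≃* G) (he : ∀ g h : G, g < h ↔ e g < e h) (hid : ∀ g, e g = g)
    (x : HCar G) : tilde e he x = x := by
  have hcone : positiveConeMap e he = id := funext fun p => Subtype.ext (hid p.1)
  have hG : ⇑e = id := funext hid
  simp [tilde_def, hcone, hG]

theorem tilde_bijective (φ : G ≃* G) (hφ : ∀ g h : G, g < h ↔ φ g < φ h) :
    Bijective (tilde φ hφ) := by
  have hsymm := φ.lt_iff_symm_lt_symm hφ
  refine ⟨LeftInverse.injective (g := tilde φ.symm hsymm) fun x => ?_,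
    RightInverse.surjective (g := tilde φ.symm hsymm) fun x => ?_⟩
  · rw [← tilde_trans φ.symm hsymm φ hφ (MulEquiv.lt_iff_trans_lt_trans hsymm hφ)]
    exact tilde_eq_self _ _ φ.symm_apply_apply x
  · rw [← tilde_trans φ hφ φ.symm hsymm (MulEquiv.lt_iff_trans_lt_trans hφ hsymm)]
    exact tilde_eq_self _ _ φ.apply_symm_apply x

theorem eq_of_tilde_eq (φ : G ≃* G) (hφ : ∀ g h : G, g < h ↔ φ g < φ h)
    (ψ : G ≃* G) (hψ : ∀ g h : G, g < h ↔ ψ g < ψ h)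
    (h : ∀ x : HCar G, tilde φ hφ x = tilde ψ hψ x) : φ = ψ :=
  MulEquiv.ext fun g => congrArg Prod.snd (h ((0, 0), g))

end Tilde

/-- Let `G` carry a left-ordering `<` with positive cone `P = {x | 1 < x}`
and let `H(G,P) = B_f ⋊ G` be built from the 2-cocycle `f` (the bilinear extension of
`f(b_g, b_h) = a_{g⁻¹h}` if `g < h`, else `0`).  Every automorphism `φ` of `G`
preserving `<` induces an automorphism `φ̃` of `H(G,P)` with
`φ̃((a_h, 0), 1) = ((a_{φ h}, 0), 1)`, and `φ ↦ φ̃` is an injective group homomorphism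
`Aut(G, <) → Aut(H(G,P))`. -/
theorem stmt18 (G : Type*) [Group G] [LinearOrder G]
    (hleft : ∀ a b c : G, a < b → c * a < c * b)
    (f : (G →₀ ℤ) → (G →₀ ℤ) → ({x : G // 1 < x} →₀ ℤ))
    (hbilin1 : ∀ b b' c : G →₀ ℤ, f (b + b') c = f b c + f b' c)
    (hbilin2 : ∀ b c c' : G →₀ ℤ, f b (c + c') = f b c + f b c')
    (hsingle : ∀ g h : G, f (Finsupp.single g 1) (Finsupp.single h 1) =
      if hlt : g < h then
        Finsupp.single (⟨g⁻¹ * h, by simpa using hleft g h g⁻¹ hlt⟩ : {x : G // 1 < x}) 1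
      else 0) :
    (∀ (φ : G ≃* G) (hφ : ∀ g h : G, g < h ↔ φ g < φ h),
      Function.Bijective (tilde φ hφ)) ∧
    (∀ (φ : G ≃* G) (hφ : ∀ g h : G, g < h ↔ φ g < φ h) (x y : HCar G),
      tilde φ hφ (hmul f x y) = hmul f (tilde φ hφ x) (tilde φ hφ y)) ∧
    (∀ (φ : G ≃* G) (hφ : ∀ g h : G, g < h ↔ φ g < φ h) (h : {x : G // 1 < x}),
      tilde φ hφ ((Finsupp.single h 1, 0), 1) =
        ((Finsupp.single (⟨φ h.1, by simpa using (hφ 1 h.1).mp h.2⟩ : {x : G // 1 < x}) 1,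
          0), 1)) ∧
    (∀ (φ : G ≃* G) (hφ : ∀ g h : G, g < h ↔ φ g < φ h)
       (ψ : G ≃* G) (hψ : ∀ g h : G, g < h ↔ ψ g < ψ h)
       (hcomp : ∀ g h : G, g < h ↔ (ψ.trans φ) g < (ψ.trans φ) h) (x : HCar G),
      tilde (ψ.trans φ) hcomp x = tilde φ hφ (tilde ψ hψ x)) ∧
    (∀ (φ : G ≃* G) (hφ : ∀ g h : G, g < h ↔ φ g < φ h)
       (ψ : G ≃* G) (hψ : ∀ g h : G, g < h ↔ ψ g < ψ h),
      (∀ x : HCar G, tilde φ hφ x = tilde ψ hψ x) → φ = ψ) := by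
  refine ⟨tilde_bijective, tilde_hmul hleft f hbilin1 hbilin2 hsingle, tilde_single_one,
    tilde_trans, eq_of_tilde_eq⟩
end

section
/- If G is a finitely generated left-orderable group with positive cone P, then the group H(G,P) = B_f ⋊ G is finitely generated; in fact, it is generated by {((0_A, b_{id}), id_G)} ∪ {((0_A, 0_B), e_i)}ᵢ for any finite generating set {e_i} of G. -/
open Finsupp

theorem Finsupp.addSubgroup_eq_top_of_single_one_mem {α : Type*} {H : AddSubgroup (α →₀ ℤ)}
    (h : ∀ a, single a 1 ∈ H) : H = ⊤ :=
  eq_top_iff.2 fun x _ => x.induction H.zero_mem fun a n _ _ _ hx =>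
    H.add_mem (by simpa using H.zsmul_mem (h a) n) hx

@[simp]
theorem Finsupp.mapDomain_fun_id {α M : Type*} [AddCommMonoid M] (v : α →₀ M) :
    mapDomain (fun a => a) v = v :=
  mapDomain_id

theorem Finsupp.mapDomain_mul_left_mapDomain_mul_left {G M : Type*} [Semigroup G]
    [AddCommMonoid M] (g h : G) (v : G →₀ M) :
    mapDomain (g * ·) (mapDomain (h * ·) v) = mapDomain (g * h * ·) v := by
  rw [← mapDomain_comp]
  congr 1
  funext z
  exact (mul_assoc g h z).symm

namespace HCar

variable {G : Type*} [Group G] [LinearOrder G]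

theorem hmul_left_injective (f : (G →₀ ℤ) → (G →₀ ℤ) → ({x : G // 1 < x} →₀ ℤ)) (x : HCar G) :
    Function.Injective (hmul f x) := by
  rintro ⟨⟨a, b⟩, g⟩ ⟨⟨a', b'⟩, g'⟩ h
  simp only [hmul, Prod.mk.injEq] at h
  obtain ⟨⟨ha, hb⟩, hg⟩ := h
  obtain rfl : b = b' := mapDomain_injective (mul_right_injective x.2) (add_left_cancel hb)
  obtain rfl : a = a' := add_left_cancel (add_right_cancel ha)
  obtain rfl : g = g' := mul_left_cancel hg
  rfl

variable {F : (G →₀ ℤ) →+ (G →₀ ℤ) →+ ({x : G // 1 < x} →₀ ℤ)}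

theorem hmul_one_left (a a' : {x : G // 1 < x} →₀ ℤ) (b b' : G →₀ ℤ) (g : G) :
    hmul (F · ·) ((a, b), 1) ((a', b'), g) = ((a + a' + F b b', b + b'), g) := by
  simp [hmul]

theorem hmul_zero_right (x : HCar G) (a : {x : G // 1 < x} →₀ ℤ) (g : G) :
    hmul (F · ·) x ((a, 0), g) = ((x.1.1 + a, x.1.2), x.2 * g) := by
  simp [hmul]

theorem hmul_zero_left (g : G) (y : HCar G) :
    hmul (F · ·) ((0, 0), g) y = ((y.1.1, mapDomain (g * ·) y.1.2), g * y.2) := by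
  simp [hmul]

theorem eq_of_hmul_eq_one {ι : HCar G → HCar G} (hι : ∀ x, hmul (F · ·) x (ι x) = ((0, 0), 1))
    (a : {x : G // 1 < x} →₀ ℤ) (b : G →₀ ℤ) (g : G) :
    ι ((a, b), g) = ((-a + F b b, mapDomain (g⁻¹ * ·) (-b)), g⁻¹) := by
  apply hmul_left_injective (F · ·) ((a, b), g)
  rw [hι]
  simp [hmul, mapDomain_mul_left_mapDomain_mul_left]

variable (F) in
structure MulInvClosed (ι : HCar G → HCar G) (S : Set (HCar G)) : Prop where
  hmul_mem : ∀ x ∈ S, ∀ y ∈ S, hmul (F · ·) x y ∈ S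
  inv_mem : ∀ x ∈ S, ι x ∈ S

variable {ι : HCar G → HCar G} {S : Set (HCar G)}

theorem one_mem_of_mem (hι : ∀ x, hmul (F · ·) x (ι x) = ((0, 0), 1)) (hS : MulInvClosed F ι S)
    {x : HCar G} (hx : x ∈ S) : ((0, 0), 1) ∈ S :=
  hι x ▸ hS.hmul_mem _ hx _ (hS.inv_mem _ hx)

theorem zero_zero_mem_of_closure_eq_top (hι : ∀ x, hmul (F · ·) x (ι x) = ((0, 0), 1))
    (hS : MulInvClosed F ι S) (hone : ((0, 0), 1) ∈ S) {E : Set G}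
    (hE : Subgroup.closure E = ⊤) (hES : ∀ e ∈ E, ((0, 0), e) ∈ S) (g : G) :
    ((0, 0), g) ∈ S := by
  let T : Subgroup G :=
    { carrier := {g | ((0, 0), g) ∈ S}
      one_mem' := hone
      mul_mem' := fun {x y} hx hy => by
        simpa [hmul_zero_left] using hS.hmul_mem _ hx _ hy
      inv_mem' := fun {x} hx => by
        simpa [eq_of_hmul_eq_one hι] using hS.inv_mem _ hx }
  have hT : ⊤ ≤ T := hE ▸ (Subgroup.closure_le T).2 hES
  exact hT (Subgroup.mem_top g)

theorem zero_single_mem (hS : MulInvClosed F ι S) (hG : ∀ g, ((0, 0), g) ∈ S)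
    (h1 : ((0, single 1 1), 1) ∈ S) (g : G) : ((0, single g 1), 1) ∈ S := by
  simpa [hmul_zero_left, hmul_zero_right, mapDomain_single] using
    hS.hmul_mem _ (hS.hmul_mem _ (hG g) _ h1) _ (hG g⁻¹)

theorem commutator_mem (hι : ∀ x, hmul (F · ·) x (ι x) = ((0, 0), 1)) (hS : MulInvClosed F ι S)
    {b c : G →₀ ℤ} (hb : ((0, b), 1) ∈ S) (hc : ((0, c), 1) ∈ S) :
    ((F b c - F c b, 0), 1) ∈ S := by
  have h := hS.hmul_mem _ (hS.hmul_mem _ (hS.hmul_mem _ hb _ hc) _ (hS.inv_mem _ hb)) _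
    (hS.inv_mem _ hc)
  simp only [eq_of_hmul_eq_one hι, hmul_one_left, inv_one, one_mul, mapDomain_fun_id] at h
  convert h using 3 <;> simp [sub_eq_add_neg]

theorem mk_zero_one_mem_of_single (hι : ∀ x, hmul (F · ·) x (ι x) = ((0, 0), 1))
    (hS : MulInvClosed F ι S) (hone : ((0, 0), 1) ∈ S)
    (hA : ∀ p, ((single p 1, 0), 1) ∈ S) (a : {x : G // 1 < x} →₀ ℤ) : ((a, 0), 1) ∈ S := by
  let V : AddSubgroup ({x : G // 1 < x} →₀ ℤ) :=
    { carrier := {a | ((a, 0), 1) ∈ S}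
      zero_mem' := hone
      add_mem' := fun {a a'} ha ha' => by
        simpa [hmul_one_left] using hS.hmul_mem _ ha _ ha'
      neg_mem' := fun {a} ha => by
        simpa [eq_of_hmul_eq_one hι] using hS.inv_mem _ ha }
  exact (addSubgroup_eq_top_of_single_one_mem (H := V) hA).ge (AddSubgroup.mem_top a)

theorem exists_mk_one_mem_of_single (hι : ∀ x, hmul (F · ·) x (ι x) = ((0, 0), 1))
    (hS : MulInvClosed F ι S) (hone : ((0, 0), 1) ∈ S)
    (hB : ∀ g, ((0, single g 1), 1) ∈ S) (b : G →₀ ℤ) : ∃ a, ((a, b), 1) ∈ S := by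
  let W : AddSubgroup (G →₀ ℤ) :=
    { carrier := {b | ∃ a, ((a, b), 1) ∈ S}
      zero_mem' := ⟨0, hone⟩
      add_mem' := fun {b b'} ⟨a, ha⟩ ⟨a', ha'⟩ =>
        ⟨a + a' + F b b', by simpa [hmul_one_left] using hS.hmul_mem _ ha _ ha'⟩
      neg_mem' := fun {b} ⟨a, ha⟩ =>
        ⟨-a + F b b, by simpa [eq_of_hmul_eq_one hι] using hS.inv_mem _ ha⟩ }
  exact (addSubgroup_eq_top_of_single_one_mem (H := W) fun g => ⟨0, hB g⟩).ge
    (AddSubgroup.mem_top b)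

theorem mem_of_forall_mk_mem (hS : MulInvClosed F ι S) (hA : ∀ a, ((a, 0), 1) ∈ S)
    (hB : ∀ b, ∃ a, ((a, b), 1) ∈ S) (hG : ∀ g, ((0, 0), g) ∈ S) (x : HCar G) : x ∈ S := by
  obtain ⟨⟨a, b⟩, g⟩ := x
  obtain ⟨a₀, h₀⟩ := hB b
  simpa [hmul_one_left, hmul_zero_right] using
    hS.hmul_mem _ (hS.hmul_mem _ (hA (a - a₀)) _ h₀) _ (hG g)

end HCar

open HCar

/-- If `G` is a finitely generated left-orderable group (generated by the
finite set `E`, and carrying a left-invariant linear order with positive cone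
`{x | 1 < x}`), then `H(G,P) = B_f ⋊ G` is finitely generated: it is generated by
`{((0, b_1), 1)} ∪ {((0, 0), e) : e ∈ E}`.  (Generation is expressed by: every subset
`S` containing these elements and closed under the multiplication `hmul f` and the
inversion `ι` of `H(G,P)` is all of `H(G,P)`.) -/
theorem stmt19 (G : Type*) [Group G] [LinearOrder G]
    (hleft : ∀ a b c : G, a < b → c * a < c * b)
    (f : (G →₀ ℤ) → (G →₀ ℤ) → ({x : G // 1 < x} →₀ ℤ))
    (hbilin1 : ∀ b b' c : G →₀ ℤ, f (b + b') c = f b c + f b' c)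
    (hbilin2 : ∀ b c c' : G →₀ ℤ, f b (c + c') = f b c + f b c')
    (hsingle : ∀ g h : G, f (Finsupp.single g 1) (Finsupp.single h 1) =
      if hlt : g < h then
        Finsupp.single (⟨g⁻¹ * h, by simpa using hleft g h g⁻¹ hlt⟩ : {x : G // 1 < x}) 1
      else 0)
    (E : Finset G) (hE : Subgroup.closure (E : Set G) = ⊤)
    (ι : HCar G → HCar G)
    (hι : ∀ x : HCar G, hmul f x (ι x) = ((0, 0), 1) ∧ hmul f (ι x) x = ((0, 0), 1)) :
    ∀ S : Set (HCar G),
      (((0 : {x : G // 1 < x} →₀ ℤ), Finsupp.single (1 : G) (1 : ℤ)), (1 : G)) ∈ S →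
      (∀ e ∈ E, (((0 : {x : G // 1 < x} →₀ ℤ), (0 : G →₀ ℤ)), e) ∈ S) →
      (∀ x ∈ S, ∀ y ∈ S, hmul f x y ∈ S) →
      (∀ x ∈ S, ι x ∈ S) →
      ∀ x : HCar G, x ∈ S := by
  intro S hb₁ hES hmulS hιS
  obtain ⟨F, rfl⟩ : ∃ F : (G →₀ ℤ) →+ (G →₀ ℤ) →+ ({x : G // 1 < x} →₀ ℤ), f = (F · ·) :=
    ⟨AddMonoidHom.mk' (fun b => AddMonoidHom.mk' (f b) (hbilin2 b))
      fun b b' => AddMonoidHom.ext (hbilin1 b b'), rfl⟩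
  have hS : MulInvClosed F ι S := ⟨hmulS, hιS⟩
  have hι₁ x := (hι x).1
  have hone := one_mem_of_mem hι₁ hS hb₁
  have hG := zero_zero_mem_of_closure_eq_top hι₁ hS hone hE hES
  have hB := zero_single_mem hS hG hb₁
  have hA : ∀ p, ((single p 1, 0), 1) ∈ S := by
    rintro ⟨g, hg⟩
    have hsub : F (single 1 1) (single g 1) - F (single g 1) (single 1 1) = single ⟨g, hg⟩ 1 := by
      simp [hsingle, hg, asymm hg]
    simpa [hsub] using commutator_mem hι₁ hS (hB 1) (hB g)
  exact mem_of_forall_mk_mem hS (mk_zero_one_mem_of_single hι₁ hS hone hA)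
    (exists_mk_one_mem_of_single hι₁ hS hone hB) hG
end
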